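/- arXiv:1909.12202 — 4 statements merged into one kernel-verified Lean document; each statement's English description precedes it below -/
import Mathlib

section
/- Let q be a real number with 1 ≤ q < ∞, let λ̲ < λ̄ be real numbers, and let S = {s ∈ ℂ : -λ̄ < Re(s) < -λ̲} be the open vertical strip. For an analytic function f : S → ℂ define N_q(f) = sup over λ ∈ (λ̲, λ̄) of ((1/2π) ∫_ℝ |f(-λ + iω)|^q dω)^{1/q}. If (f_n) is a sequence of analytic functions on S with N_q(f_n) < ∞ for all n which is Cauchy with respect to N_q (i.e., for every ε > 0 there is N such that N_q(f_m - f_n) < ε for all m, n ≥ N), then there exists an analytic function f : S → ℂ with N_q(f) < ∞ such that N_q(f_n - f) → 0 as n → ∞. -/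
/-!
By the mean value property and Jensen's inequality, `‖h c‖ ^ q` is at most the average of
`‖h‖ ^ q` over every circle about `c`, so for `h` holomorphic near the closed disc of radius `δ`
about `c` in the strip, `π δ² ‖h c‖ ^ q` is at most the integral of `‖h‖ ^ q` over the disc.
Enlarging the disc to the vertical band of width `2 δ` and integrating line by line bounds this
by `2 δ · 2π · N_q(h) ^ q`. Hence an `N_q`-Cauchy sequence is uniformly Cauchy on compact
subsets of the strip, and its locally uniform limit `g` is holomorphic. Fatou's lemma on each
vertical line gives `N_q(f n - g) → 0`, and Minkowski's inequality gives `N_q(g) < ∞`.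
-/

open MeasureTheory Filter

/-- The open vertical strip `{s : ℂ | -λ̄ < Re s < -λ̲}`. -/
def strip (llo lhi : ℝ) : Set ℂ := {s : ℂ | -lhi < s.re ∧ s.re < -llo}

/-- The `H_q` norm on the strip: `sup_{λ ∈ (λ̲,λ̄)} ((1/2π)∫ |f(-λ+iω)|^q dω)^{1/q}`,
valued in `ℝ≥0∞`. -/
noncomputable def HqNorm (q llo lhi : ℝ) (f : ℂ → ℂ) : ENNReal :=
  ⨆ l ∈ Set.Ioo llo lhi,
    (ENNReal.ofReal (1 / (2 * Real.pi)) *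
      ∫⁻ ω : ℝ, (‖f (-l + ω * Complex.I)‖₊ : ENNReal) ^ q) ^ (1 / q)

open Metric Set Real Topology
open scoped ENNReal

theorem tendstoLocallyUniformlyOn_limUnder {α β : Type*} [TopologicalSpace α]
    [LocallyCompactSpace α] [UniformSpace β] [CompleteSpace β] [Nonempty β] {F : ℕ → α → β}
    {U : Set α} (hU : IsOpen U)
    (hF : ∀ K ⊆ U, IsCompact K → UniformCauchySeqOn F atTop K) :
    TendstoLocallyUniformlyOn F (fun x ↦ limUnder atTop fun n ↦ F n x) atTop U := by
  rw [tendstoLocallyUniformlyOn_iff_forall_isCompact hU]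
  intro K hKU hK
  refine (hF K hKU hK).tendstoUniformlyOn_of_tendsto fun x hx ↦ ?_
  have hx' := hF {x} (singleton_subset_iff.2 (hKU hx)) isCompact_singleton
  exact (hx'.cauchySeq rfl).tendsto_limUnder

theorem ENNReal.tendsto_atTop_zero_of_forall_lt_ofReal {u : ℕ → ℕ → ℝ≥0∞}
    (hu : ∀ ε : ℝ, 0 < ε → ∃ N : ℕ, ∀ m n, N ≤ m → N ≤ n → u m n < ENNReal.ofReal ε) :
    Tendsto (fun p : ℕ × ℕ ↦ u p.1 p.2) atTop (𝓝 0) := by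
  refine ENNReal.tendsto_nhds_zero.2 fun ε hε ↦ ?_
  obtain ⟨r, -, hr0, hrε⟩ := ENNReal.lt_iff_exists_real_btwn.1 hε
  obtain ⟨N, hN⟩ := hu r (ENNReal.ofReal_pos.1 hr0)
  exact eventually_atTop_prod_self'.2 ⟨N, fun m hm n hn ↦ ((hN m n hm hn).trans hrε).le⟩

theorem uniformCauchySeqOn_of_enorm_sub_le {α E : Type*} [NormedAddCommGroup E]
    {F : ℕ → α → E} {K : Set α} {b : ℕ × ℕ → ℝ≥0∞} (hb : Tendsto b atTop (𝓝 0))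
    (hFb : ∀ m n, ∀ x ∈ K, ‖F m x - F n x‖ₑ ≤ b (m, n)) :
    UniformCauchySeqOn F atTop K := by
  intro u hu
  obtain ⟨ε, hε, hεu⟩ := mem_uniformity_edist.1 hu
  rw [prod_atTop_atTop_eq]
  filter_upwards [(tendsto_order.1 hb).2 ε hε] with p hp x hx
  exact hεu (by rw [edist_eq_enorm_sub]; exact (hFb p.1 p.2 x hx).trans_lt hp)

theorem DiffContOnCl.continuous_comp_circleMap {E : Type*} [NormedAddCommGroup E]
    [NormedSpace ℂ E] {f : ℂ → E} {c : ℂ} {R : ℝ} (hf : DiffContOnCl ℂ f (ball c |R|)) :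
    Continuous fun θ ↦ f (circleMap c R θ) :=
  hf.continuousOn_ball.comp_continuous (continuous_circleMap c R)
    fun θ ↦ sphere_subset_closedBall (circleMap_mem_sphere' c R θ)

theorem norm_rpow_le_circleAverage {E : Type*} [NormedAddCommGroup E] [NormedSpace ℂ E]
    [CompleteSpace E] {f : ℂ → E} {c : ℂ} {R q : ℝ} (hq : 1 ≤ q)
    (hf : DiffContOnCl ℂ f (ball c |R|)) :
    ‖f c‖ ^ q ≤ circleAverage (fun z ↦ ‖f z‖ ^ q) c R := by
  have hcont := hf.continuous_comp_circleMap
  have hmean : ‖f c‖ ≤ circleAverage (fun z ↦ ‖f z‖) c R := by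
    rw [← hf.circleAverage, circleAverage_def, circleAverage_def, norm_smul,
      norm_inv, Real.norm_of_nonneg two_pi_pos.le, smul_eq_mul]
    gcongr
    exact intervalIntegral.norm_integral_le_integral_norm two_pi_pos.le
  have hjensen : (circleAverage (fun z ↦ ‖f z‖) c R) ^ q
      ≤ circleAverage (fun z ↦ ‖f z‖ ^ q) c R := by
    rw [circleAverage_eq_intervalAverage, circleAverage_eq_intervalAverage]
    refine (convexOn_rpow hq).map_set_average_le
      (continuousOn_id.rpow_const fun _ _ ↦ Or.inr (by linarith)) isClosed_Ici ?_ ?_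
      (ae_of_all _ fun θ ↦ norm_nonneg _) ?_ ?_
    · simp [pi_pos.ne']
    · simp [ENNReal.mul_eq_top]
    · exact hcont.norm.integrableOn_uIoc
    · exact (hcont.norm.rpow_const fun _ ↦ Or.inr (by linarith)).integrableOn_uIoc
  calc ‖f c‖ ^ q ≤ (circleAverage (fun z ↦ ‖f z‖) c R) ^ q := by gcongr
    _ ≤ _ := hjensen

theorem circleMap_eq_add_polarCoord_symm (c : ℂ) (p : ℝ × ℝ) :
    circleMap c p.1 p.2 = c + Complex.polarCoord.symm p := by
  simp only [circleMap, Complex.polarCoord_symm_apply, Complex.exp_mul_I]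
  push_cast
  ring

theorem lintegral_ball_eq_lintegral_circleMap {U : ℂ → ℝ≥0∞} {c : ℂ} {δ : ℝ}
    (hU : ContinuousOn U (ball c δ)) :
    ∫⁻ z in ball c δ, U z =
      ∫⁻ r in Ioo 0 δ, ENNReal.ofReal r * ∫⁻ θ in Ioo (-π) π, U (circleMap c r θ) := by
  set T : Set (ℝ × ℝ) := Ioo 0 δ ×ˢ Ioo (-π) π
  have hT : MeasurableSet T := measurableSet_Ioo.prod measurableSet_Ioo
  have hTsub : T ⊆ polarCoord.target := prod_mono (fun r hr ↦ hr.1) subset_rfl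
  have hpolar : EqOn
      (fun p ↦ ENNReal.ofReal p.1 • (ball c δ).indicator U (c + Complex.polarCoord.symm p))
      (T.indicator fun p ↦ ENNReal.ofReal p.1 * U (circleMap c p.1 p.2)) polarCoord.target := by
    rintro ⟨r, θ⟩ ⟨hr, hθ⟩
    have hmem : c + Complex.polarCoord.symm (r, θ) ∈ ball c δ ↔ (r, θ) ∈ T := by
      simp [T, hθ, mem_ball, dist_eq_norm, abs_of_pos (mem_Ioi.mp hr), mem_Ioi.mp hr]
    by_cases h : (r, θ) ∈ T
    · dsimp only
      rw [indicator_of_mem h, indicator_of_mem (hmem.2 h), smul_eq_mul,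
        circleMap_eq_add_polarCoord_symm]
    · dsimp only
      rw [indicator_of_notMem h, indicator_of_notMem (mt hmem.1 h), smul_zero]
  have hmeas : AEMeasurable (fun p : ℝ × ℝ ↦ ENNReal.ofReal p.1 * U (circleMap c p.1 p.2))
      ((volume.restrict (Ioo 0 δ)).prod (volume.restrict (Ioo (-π) π))) := by
    rw [Measure.prod_restrict, ← Measure.volume_eq_prod]
    refine (ENNReal.measurable_ofReal.comp measurable_fst).aemeasurable.mul
      (ContinuousOn.aemeasurable ?_ hT)
    refine hU.comp (by fun_prop) fun p hp ↦ ?_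
    rw [circleMap_eq_add_polarCoord_symm, mem_ball, dist_self_add_left,
      Complex.norm_polarCoord_symm, abs_of_pos hp.1.1]
    exact hp.1.2
  calc ∫⁻ z in ball c δ, U z = ∫⁻ z, (ball c δ).indicator U (c + z) := by
        rw [lintegral_add_left_eq_self, lintegral_indicator measurableSet_ball]
    _ = ∫⁻ p in T, ENNReal.ofReal p.1 * U (circleMap c p.1 p.2) := by
        rw [← Complex.lintegral_comp_polarCoord_symm,
          setLIntegral_congr_fun polarCoord.open_target.measurableSet hpolar,
          lintegral_indicator hT, Measure.restrict_restrict hT, inter_eq_left.2 hTsub]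
    _ = ∫⁻ r in Ioo 0 δ, ∫⁻ θ in Ioo (-π) π, ENNReal.ofReal r * U (circleMap c r θ) := by
        rw [Measure.volume_eq_prod, ← Measure.prod_restrict, lintegral_prod _ hmeas]
    _ = _ := by
        simp_rw [lintegral_const_mul' _ _ ENNReal.ofReal_ne_top]

theorem ofReal_two_pi_mul_enorm_rpow_le_lintegral_circleMap {E : Type*} [NormedAddCommGroup E]
    [NormedSpace ℂ E] [CompleteSpace E] {f : ℂ → E} {c : ℂ} {R q : ℝ} (hq : 1 ≤ q)
    (hf : DiffContOnCl ℂ f (ball c |R|)) :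
    ENNReal.ofReal (2 * π) * ‖f c‖ₑ ^ q ≤ ∫⁻ θ in Ioo (-π) π, ‖f (circleMap c R θ)‖ₑ ^ q := by
  have hq0 : 0 ≤ q := by linarith
  set u : ℝ → ℝ := fun θ ↦ ‖f (circleMap c R θ)‖ ^ q
  have hu : Continuous u :=
    hf.continuous_comp_circleMap.norm.rpow_const fun _ ↦ Or.inr hq0
  have hper : Function.Periodic u (2 * π) := fun θ ↦ by simp [u, periodic_circleMap c R θ]
  have hreal : 2 * π * ‖f c‖ ^ q ≤ ∫ θ in Ioo (-π) π, u θ := by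
    have hmean : ‖f c‖ ^ q ≤ (2 * π)⁻¹ * ∫ θ in 0..2 * π, u θ := norm_rpow_le_circleAverage hq hf
    have hshift := hper.intervalIntegral_add_eq 0 (-π)
    rw [zero_add, show -π + 2 * π = π by ring,
      intervalIntegral.integral_of_le (a := -π) (by linarith [pi_pos]),
      integral_Ioc_eq_integral_Ioo] at hshift
    rw [hshift] at hmean
    rwa [le_inv_mul_iff₀ two_pi_pos] at hmean
  calc ENNReal.ofReal (2 * π) * ‖f c‖ₑ ^ q = ENNReal.ofReal (2 * π * ‖f c‖ ^ q) := by
        rw [ENNReal.ofReal_mul two_pi_pos.le, ← ENNReal.ofReal_rpow_of_nonneg (norm_nonneg _) hq0,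
          ofReal_norm]
    _ ≤ ENNReal.ofReal (∫ θ in Ioo (-π) π, u θ) := ENNReal.ofReal_le_ofReal hreal
    _ = ∫⁻ θ in Ioo (-π) π, ‖f (circleMap c R θ)‖ₑ ^ q := by
        rw [ofReal_integral_eq_lintegral_ofReal (hu.integrableOn_Icc.mono_set Ioo_subset_Icc_self)
          (ae_of_all _ fun θ ↦ by positivity)]
        exact lintegral_congr fun θ ↦ by
          rw [← ENNReal.ofReal_rpow_of_nonneg (norm_nonneg _) hq0, ofReal_norm]

theorem Complex.volume_ball_eq_ofReal (c : ℂ) {δ : ℝ} (hδ : 0 ≤ δ) :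
    volume (ball c δ) = ENNReal.ofReal (π * δ ^ 2) := by
  rw [Complex.volume_ball, ← ENNReal.ofReal_pow hδ, ← ENNReal.ofReal_coe_nnreal,
    NNReal.coe_real_pi, ← ENNReal.ofReal_mul (by positivity), mul_comm]

theorem setLIntegral_Ioo_zero_ofReal {δ : ℝ} (hδ : 0 ≤ δ) :
    ∫⁻ r in Ioo 0 δ, ENNReal.ofReal r = ENNReal.ofReal (δ ^ 2 / 2) := by
  rw [← ofReal_integral_eq_lintegral_ofReal (f := fun r ↦ r)
    ((continuous_id.integrableOn_Icc (a := 0) (b := δ)).mono_set Ioo_subset_Icc_self)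
    (ae_restrict_of_forall_mem measurableSet_Ioo fun r hr ↦ hr.1.le),
    ← integral_Ioc_eq_integral_Ioo, ← intervalIntegral.integral_of_le hδ, integral_id]
  ring_nf

theorem volume_ball_mul_enorm_rpow_le_setLIntegral {E : Type*} [NormedAddCommGroup E]
    [NormedSpace ℂ E] [CompleteSpace E] {f : ℂ → E} {c : ℂ} {δ q : ℝ} (hq : 1 ≤ q)
    (hf : DifferentiableOn ℂ f (closedBall c δ)) :
    volume (ball c δ) * ‖f c‖ₑ ^ q ≤ ∫⁻ z in ball c δ, ‖f z‖ₑ ^ q := by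
  rcases le_or_gt δ 0 with hδ | hδ
  · simp [ball_eq_empty.2 hδ]
  have hcont : ContinuousOn (fun z ↦ ‖f z‖ₑ ^ q) (ball c δ) :=
    ENNReal.continuous_rpow_const.comp_continuousOn
      (hf.continuousOn.enorm.mono ball_subset_closedBall)
  have hcircle : ∀ r ∈ Ioo 0 δ,
      ENNReal.ofReal (2 * π) * ‖f c‖ₑ ^ q ≤ ∫⁻ θ in Ioo (-π) π, ‖f (circleMap c r θ)‖ₑ ^ q :=
    fun r hr ↦ ofReal_two_pi_mul_enorm_rpow_le_lintegral_circleMap hq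
      (hf.diffContOnCl_ball <| by
        rw [abs_of_pos hr.1]; exact closedBall_subset_closedBall hr.2.le)
  rw [lintegral_ball_eq_lintegral_circleMap hcont]
  calc volume (ball c δ) * ‖f c‖ₑ ^ q
      = ∫⁻ r in Ioo 0 δ, ENNReal.ofReal r * (ENNReal.ofReal (2 * π) * ‖f c‖ₑ ^ q) := by
        rw [lintegral_mul_const' _ _ (by finiteness), setLIntegral_Ioo_zero_ofReal hδ.le,
          Complex.volume_ball_eq_ofReal c hδ.le, ← mul_assoc, ← ENNReal.ofReal_mul (by positivity)]
        ring_nf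
    _ ≤ _ := setLIntegral_mono' measurableSet_Ioo fun r hr ↦ mul_le_mul_right (hcircle r hr) _

theorem setLIntegral_re_preimage_le (U : ℂ → ℝ≥0∞) {s : Set ℝ} (hs : MeasurableSet s) :
    ∫⁻ z in Complex.re ⁻¹' s, U z ≤ ∫⁻ x in s, ∫⁻ y : ℝ, U (x + y * Complex.I) := by
  set V := (Complex.re ⁻¹' s).indicator U
  calc ∫⁻ z in Complex.re ⁻¹' s, U z
      = ∫⁻ p : ℝ × ℝ, V (Complex.measurableEquivRealProd.symm p) := by
        rw [Complex.volume_preserving_equiv_real_prod.symm.lintegral_comp_emb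
          Complex.measurableEquivRealProd.symm.measurableEmbedding,
          lintegral_indicator (hs.preimage Complex.measurable_re)]
    _ ≤ ∫⁻ x, ∫⁻ y, V (Complex.measurableEquivRealProd.symm (x, y)) := by
        rw [Measure.volume_eq_prod]; exact lintegral_prod_le _
    _ = ∫⁻ x in s, ∫⁻ y : ℝ, U (x + y * Complex.I) := by
        rw [← lintegral_indicator hs]
        congr 1 with x
        by_cases hx : x ∈ s <;>
          simp [V, hx, Complex.measurableEquivRealProd, Complex.equivRealProdCLM_symm_apply]

section Strip

variable {q llo lhi : ℝ}

theorem isOpen_strip (llo lhi : ℝ) : IsOpen (strip llo lhi) :=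
  (isOpen_lt continuous_const Complex.continuous_re).inter
    (isOpen_lt Complex.continuous_re continuous_const)

theorem neg_add_mul_I_mem_strip {l : ℝ} (hl : l ∈ Ioo llo lhi) (ω : ℝ) :
    (-l + ω * Complex.I : ℂ) ∈ strip llo lhi := by
  simpa [strip, and_comm] using hl

theorem continuous_comp_strip_line {f : ℂ → ℂ} (hf : ContinuousOn f (strip llo lhi)) {l : ℝ}
    (hl : l ∈ Ioo llo lhi) : Continuous fun ω : ℝ ↦ f (-l + ω * Complex.I) :=
  hf.comp_continuous (by fun_prop) (neg_add_mul_I_mem_strip hl)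

theorem HqNorm_eq_iSup_eLpNorm (hq : 0 < q) (f : ℂ → ℂ) :
    HqNorm q llo lhi f = ⨆ l ∈ Ioo llo lhi, eLpNorm (fun ω : ℝ ↦ f (-l + ω * Complex.I))
      (ENNReal.ofReal q) (ENNReal.ofReal (1 / (2 * π)) • volume) := by
  simp only [HqNorm, eLpNorm_eq_eLpNorm' (by simpa using hq) ENNReal.ofReal_ne_top,
    ENNReal.toReal_ofReal hq.le, eLpNorm'_eq_lintegral_enorm, lintegral_smul_measure]
  rfl

theorem eLpNorm_line_le_HqNorm (hq : 0 < q) (f : ℂ → ℂ) {l : ℝ} (hl : l ∈ Ioo llo lhi) :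
    eLpNorm (fun ω : ℝ ↦ f (-l + ω * Complex.I)) (ENNReal.ofReal q)
      (ENNReal.ofReal (1 / (2 * π)) • volume) ≤ HqNorm q llo lhi f := by
  rw [HqNorm_eq_iSup_eLpNorm hq]
  exact le_iSup₂ (f := fun l (_ : l ∈ Ioo llo lhi) ↦ eLpNorm (fun ω : ℝ ↦ f (-l + ω * Complex.I))
    (ENNReal.ofReal q) (ENNReal.ofReal (1 / (2 * π)) • volume)) l hl

theorem lintegral_line_le_HqNorm (hq : 0 < q) (f : ℂ → ℂ) {l : ℝ} (hl : l ∈ Ioo llo lhi) :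
    ∫⁻ ω : ℝ, ‖f (-l + ω * Complex.I)‖ₑ ^ q ≤ ENNReal.ofReal (2 * π) * HqNorm q llo lhi f ^ q := by
  have h : (ENNReal.ofReal (1 / (2 * π)) * ∫⁻ ω : ℝ, ‖f (-l + ω * Complex.I)‖ₑ ^ q) ^ (1 / q)
      ≤ HqNorm q llo lhi f :=
    le_iSup₂ (f := fun l (_ : l ∈ Ioo llo lhi) ↦ (ENNReal.ofReal (1 / (2 * π)) *
      ∫⁻ ω : ℝ, ‖f (-l + ω * Complex.I)‖ₑ ^ q) ^ (1 / q)) l hl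
  rw [one_div q, ENNReal.rpow_inv_le_iff hq] at h
  calc ∫⁻ ω : ℝ, ‖f (-l + ω * Complex.I)‖ₑ ^ q
      = ENNReal.ofReal (2 * π) *
          (ENNReal.ofReal (1 / (2 * π)) * ∫⁻ ω : ℝ, ‖f (-l + ω * Complex.I)‖ₑ ^ q) := by
        rw [← mul_assoc, ← ENNReal.ofReal_mul two_pi_pos.le, mul_one_div_cancel two_pi_pos.ne',
          ENNReal.ofReal_one, one_mul]
    _ ≤ _ := mul_le_mul_right h _

theorem setLIntegral_re_preimage_Ioo_le_HqNorm (hq : 0 < q) (f : ℂ → ℂ) {a b : ℝ}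
    (ha : -lhi ≤ a) (hb : b ≤ -llo) :
    ∫⁻ z in Complex.re ⁻¹' Ioo a b, ‖f z‖ₑ ^ q
      ≤ ENNReal.ofReal (b - a) * (ENNReal.ofReal (2 * π) * HqNorm q llo lhi f ^ q) := by
  calc ∫⁻ z in Complex.re ⁻¹' Ioo a b, ‖f z‖ₑ ^ q
      ≤ ∫⁻ x in Ioo a b, ∫⁻ y : ℝ, ‖f (x + y * Complex.I)‖ₑ ^ q :=
        setLIntegral_re_preimage_le _ measurableSet_Ioo
    _ ≤ ∫⁻ _ in Ioo a b, ENNReal.ofReal (2 * π) * HqNorm q llo lhi f ^ q :=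
        setLIntegral_mono' measurableSet_Ioo fun x hx ↦ by
          simpa using lintegral_line_le_HqNorm hq f (l := -x)
            ⟨by linarith [hx.2], by linarith [hx.1]⟩
    _ = _ := by rw [setLIntegral_const, Real.volume_Ioo, mul_comm]

theorem enorm_le_HqNorm (hq : 1 ≤ q) {f : ℂ → ℂ} (hf : DifferentiableOn ℂ f (strip llo lhi))
    {c : ℂ} {δ : ℝ} (hδ : 0 < δ) (hball : closedBall c δ ⊆ strip llo lhi) :
    ‖f c‖ₑ ≤ ENNReal.ofReal ((4 / δ) ^ (1 / q)) * HqNorm q llo lhi f := by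
  have hq0 : 0 < q := by linarith
  have hleft : -lhi < c.re - δ := by
    simpa using (hball (mem_closedBall.2 (by simp [abs_of_pos hδ] : dist (c - δ) c ≤ δ))).1
  have hright : c.re + δ < -llo := by
    simpa using (hball (mem_closedBall.2 (by simp [abs_of_pos hδ] : dist (c + δ) c ≤ δ))).2
  have hband : ball c δ ⊆ Complex.re ⁻¹' Ioo (c.re - δ) (c.re + δ) := fun z hz ↦ by
    have := (Complex.abs_re_le_norm (z - c)).trans_lt (mem_ball_iff_norm.1 hz)
    rw [Complex.sub_re, abs_sub_lt_iff] at this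
    exact ⟨by linarith, by linarith⟩
  have hpow : ‖f c‖ₑ ^ q ≤ ENNReal.ofReal (4 / δ) * HqNorm q llo lhi f ^ q := by
    have hvol := Complex.volume_ball_eq_ofReal c hδ.le
    refine (ENNReal.mul_le_mul_iff_right (a := volume (ball c δ)) ?_ ?_).1 ?_
    · rw [hvol, ne_eq, ENNReal.ofReal_eq_zero, not_le]; positivity
    · simp [hvol]
    calc volume (ball c δ) * ‖f c‖ₑ ^ q ≤ ∫⁻ z in ball c δ, ‖f z‖ₑ ^ q :=
          volume_ball_mul_enorm_rpow_le_setLIntegral hq (hf.mono hball)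
      _ ≤ ∫⁻ z in Complex.re ⁻¹' Ioo (c.re - δ) (c.re + δ), ‖f z‖ₑ ^ q := lintegral_mono_set hband
      _ ≤ ENNReal.ofReal (c.re + δ - (c.re - δ)) *
            (ENNReal.ofReal (2 * π) * HqNorm q llo lhi f ^ q) :=
          setLIntegral_re_preimage_Ioo_le_HqNorm hq0 f hleft.le hright.le
      _ = volume (ball c δ) * (ENNReal.ofReal (4 / δ) * HqNorm q llo lhi f ^ q) := by
          rw [hvol, ← mul_assoc, ← mul_assoc, ← ENNReal.ofReal_mul (by linarith),
            ← ENNReal.ofReal_mul (by positivity)]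
          congr 2
          field_simp
          ring
  calc ‖f c‖ₑ = (‖f c‖ₑ ^ q) ^ (1 / q) := by
        rw [← ENNReal.rpow_mul, mul_one_div_cancel hq0.ne', ENNReal.rpow_one]
    _ ≤ (ENNReal.ofReal (4 / δ) * HqNorm q llo lhi f ^ q) ^ (1 / q) := by gcongr
    _ = ENNReal.ofReal ((4 / δ) ^ (1 / q)) * HqNorm q llo lhi f := by
        rw [ENNReal.mul_rpow_of_nonneg _ _ (by positivity), ← ENNReal.rpow_mul,
          mul_one_div_cancel hq0.ne', ENNReal.rpow_one, ENNReal.ofReal_rpow_of_pos (by positivity)]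

theorem HqNorm_sub_le (hq : 1 ≤ q) {f g : ℂ → ℂ} (hf : ContinuousOn f (strip llo lhi))
    (hg : ContinuousOn g (strip llo lhi)) :
    HqNorm q llo lhi (fun s ↦ f s - g s) ≤ HqNorm q llo lhi f + HqNorm q llo lhi g := by
  have hq0 : 0 < q := by linarith
  rw [HqNorm_eq_iSup_eLpNorm hq0]
  refine iSup₂_le fun l hl ↦ (eLpNorm_sub_le (continuous_comp_strip_line hf hl).aestronglyMeasurable
    (continuous_comp_strip_line hg hl).aestronglyMeasurable (by simpa using hq)).trans ?_
  exact add_le_add (eLpNorm_line_le_HqNorm hq0 f hl) (eLpNorm_line_le_HqNorm hq0 g hl)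

theorem HqNorm_le_of_tendsto (hq : 0 < q) {F : ℕ → ℂ → ℂ} {G : ℂ → ℂ} {B : ℝ≥0∞}
    (hF : ∀ m, ContinuousOn (F m) (strip llo lhi))
    (hlim : ∀ s ∈ strip llo lhi, Tendsto (fun m ↦ F m s) atTop (𝓝 (G s)))
    (hB : ∀ᶠ m in atTop, HqNorm q llo lhi (F m) ≤ B) :
    HqNorm q llo lhi G ≤ B := by
  rw [HqNorm_eq_iSup_eLpNorm hq]
  refine iSup₂_le fun l hl ↦ (Lp.eLpNorm_lim_le_liminf_eLpNorm
    (fun m ↦ (continuous_comp_strip_line (hF m) hl).aestronglyMeasurable) _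
    (ae_of_all _ fun ω ↦ hlim _ (neg_add_mul_I_mem_strip hl ω))).trans ?_
  exact liminf_le_of_frequently_le'
    (hB.mono fun m hm ↦ (eLpNorm_line_le_HqNorm hq (F m) hl).trans hm).frequently

theorem uniformCauchySeqOn_of_tendsto_HqNorm_sub (hq : 1 ≤ q) {f : ℕ → ℂ → ℂ}
    (hf : ∀ n, DifferentiableOn ℂ (f n) (strip llo lhi))
    (hcauchy : Tendsto (fun p : ℕ × ℕ ↦ HqNorm q llo lhi fun s ↦ f p.1 s - f p.2 s) atTop (𝓝 0))
    {K : Set ℂ} (hK : IsCompact K) (hKS : K ⊆ strip llo lhi) :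
    UniformCauchySeqOn f atTop K := by
  obtain ⟨δ, hδ, hδK⟩ := hK.exists_cthickening_subset_open (isOpen_strip llo lhi) hKS
  refine uniformCauchySeqOn_of_enorm_sub_le (b := fun p ↦ ENNReal.ofReal ((4 / δ) ^ (1 / q)) *
    HqNorm q llo lhi fun s ↦ f p.1 s - f p.2 s) ?_ fun m n x hx ↦
    enorm_le_HqNorm hq ((hf m).sub (hf n)) hδ ((closedBall_subset_cthickening hx δ).trans hδK)
  simpa using ENNReal.Tendsto.const_mul hcauchy (Or.inr ENNReal.ofReal_ne_top)

theorem tendsto_HqNorm_sub_of_tendsto (hq : 0 < q) {f : ℕ → ℂ → ℂ} {g : ℂ → ℂ}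
    (hf : ∀ n, ContinuousOn (f n) (strip llo lhi))
    (hcauchy : Tendsto (fun p : ℕ × ℕ ↦ HqNorm q llo lhi fun s ↦ f p.1 s - f p.2 s) atTop (𝓝 0))
    (hlim : ∀ s ∈ strip llo lhi, Tendsto (fun n ↦ f n s) atTop (𝓝 (g s))) :
    Tendsto (fun n ↦ HqNorm q llo lhi fun s ↦ f n s - g s) atTop (𝓝 0) := by
  refine ENNReal.tendsto_nhds_zero.2 fun ε hε ↦ ?_
  filter_upwards [eventually_atTop_curry (ENNReal.tendsto_nhds_zero.1 hcauchy ε hε)] with n hn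
  exact HqNorm_le_of_tendsto hq (fun m ↦ (hf n).sub (hf m))
    (fun s hs ↦ tendsto_const_nhds.sub (hlim s hs)) hn

end Strip

theorem hardy_space_strip_complete_general (q llo lhi : ℝ) (hq : 1 ≤ q)
    (f : ℕ → ℂ → ℂ)
    (hf_an : ∀ n, DifferentiableOn ℂ (f n) (strip llo lhi))
    (hf_fin : ∀ n, HqNorm q llo lhi (f n) < ⊤)
    (hf_cauchy : ∀ ε : ℝ, 0 < ε → ∃ N : ℕ, ∀ m n : ℕ, N ≤ m → N ≤ n →
      HqNorm q llo lhi (fun s => f m s - f n s) < ENNReal.ofReal ε) :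
    ∃ g : ℂ → ℂ, DifferentiableOn ℂ g (strip llo lhi) ∧
      HqNorm q llo lhi g < ⊤ ∧
      Tendsto (fun n => HqNorm q llo lhi (fun s => f n s - g s)) atTop (nhds 0) := by
  have hcont n : ContinuousOn (f n) (strip llo lhi) := (hf_an n).continuousOn
  have hcauchy := ENNReal.tendsto_atTop_zero_of_forall_lt_ofReal hf_cauchy
  set g : ℂ → ℂ := fun s ↦ limUnder atTop fun n ↦ f n s
  have hlu : TendstoLocallyUniformlyOn f g atTop (strip llo lhi) :=
    tendstoLocallyUniformlyOn_limUnder (isOpen_strip llo lhi) fun K hKS hK ↦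
      uniformCauchySeqOn_of_tendsto_HqNorm_sub hq hf_an hcauchy hK hKS
  have hg : DifferentiableOn ℂ g (strip llo lhi) :=
    hlu.differentiableOn (Eventually.of_forall hf_an) (isOpen_strip llo lhi)
  have htail : Tendsto (fun n ↦ HqNorm q llo lhi fun s ↦ f n s - g s) atTop (𝓝 0) :=
    tendsto_HqNorm_sub_of_tendsto (by linarith) hcont hcauchy fun s hs ↦ hlu.tendsto_at hs
  obtain ⟨N, hN⟩ := (ENNReal.tendsto_nhds_zero.1 htail 1 one_pos).exists
  refine ⟨g, hg, ?_, htail⟩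
  calc HqNorm q llo lhi g = HqNorm q llo lhi fun s ↦ f N s - (f N s - g s) := by
        simp_rw [sub_sub_cancel]
    _ ≤ HqNorm q llo lhi (f N) + HqNorm q llo lhi fun s ↦ f N s - g s :=
        HqNorm_sub_le hq (hcont N) ((hcont N).sub hg.continuousOn)
    _ < ⊤ := ENNReal.add_lt_top.2 ⟨hf_fin N, hN.trans_lt ENNReal.one_lt_top⟩

/-- Completeness of the Hardy space `H_q` on a vertical strip, `1 ≤ q < ∞`
(Theorem 1 of the paper). -/
theorem hardy_space_strip_complete (q llo lhi : ℝ) (hq : 1 ≤ q) (hl : llo < lhi)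
    (f : ℕ → ℂ → ℂ)
    (hf_an : ∀ n, DifferentiableOn ℂ (f n) (strip llo lhi))
    (hf_fin : ∀ n, HqNorm q llo lhi (f n) < ⊤)
    (hf_cauchy : ∀ ε : ℝ, 0 < ε → ∃ N : ℕ, ∀ m n : ℕ, N ≤ m → N ≤ n →
      HqNorm q llo lhi (fun s => f m s - f n s) < ENNReal.ofReal ε) :
    ∃ g : ℂ → ℂ, DifferentiableOn ℂ g (strip llo lhi) ∧
      HqNorm q llo lhi g < ⊤ ∧
      Tendsto (fun n => HqNorm q llo lhi (fun s => f n s - g s)) atTop (nhds 0) :=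
  hardy_space_strip_complete_general q llo lhi hq f hf_an hf_fin hf_cauchy
end

section
/- Let A be an n×n complex matrix and let s ∈ ℂ be such that Re(s) < Re(μ) for every eigenvalue μ of A. Then the matrix sI - A is invertible, the function t ↦ e^{-st} exp(tA) is integrable on (-∞, 0], and ∫_{-∞}^0 e^{-st} exp(tA) dt = -(sI - A)^{-1}. -/
/-!
Put `N = A - sI`, so that `e^{-st} exp(tA) = exp(tN)` and every eigenvalue of `N` has positive
real part; pick `0 < b < Re μ` for all of them. On a generalized eigenvector `w` for `μ` the series
of `exp(tN) w` terminates, `exp(tN) w = e^{μt} ∑_{j<k} t^j/j! (N - μ)^j w`, and on `t ≤ 0` each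
term is `O(e^{bt})`. Since `ℂⁿ` is spanned by generalized eigenvectors, `exp(tN) = O(e^{bt})` on
`(-∞, 0]`. Hence `exp(tN)` is integrable there and tends to `0` at `-∞`, and since
`d/dt exp(tN) = exp(tN) N` the fundamental theorem of calculus gives `(∫_{-∞}^0 exp(tN) dt) N = 1`.
-/

open MeasureTheory Matrix

attribute [local instance] Matrix.normedAddCommGroup Matrix.normedSpace

instance Matrix.continuousENormOfNormedAddCommGroup {m n α : Type*} [Fintype m] [Fintype n]
    [NormedAddCommGroup α] : ContinuousENorm (Matrix m n α) :=
  @SeminormedAddGroup.toContinuousENorm _ Matrix.seminormedAddCommGroup.toSeminormedAddGroup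

open NormedSpace Filter Set Asymptotics Topology Nat

theorem isBigO_pow_mul_cexp_Iic {μ : ℂ} {b : ℝ} (hb : b < μ.re) (j : ℕ) :
    (fun t : ℝ => (t : ℂ) ^ j * Complex.exp (μ * t)) =O[𝓟 (Iic 0)]
      fun t => Real.exp (b * t) := by
  have hc : 0 < μ.re - b := sub_pos.2 hb
  refine isBigO_principal.2 ⟨j ! / (μ.re - b) ^ j, fun t (ht : t ≤ 0) => ?_⟩
  have hpow := Real.pow_div_factorial_le_exp (x := (μ.re - b) * -t) (by nlinarith) j
  rw [div_le_iff₀ (by positivity), mul_pow] at hpow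
  rw [norm_mul, norm_pow, Complex.norm_real, Complex.norm_exp, Real.norm_eq_abs,
    Real.norm_eq_abs, abs_of_nonpos ht, Real.abs_exp, Complex.re_mul_ofReal]
  calc (-t) ^ j * Real.exp (μ.re * t)
      = (μ.re - b) ^ j * (-t) ^ j * Real.exp (μ.re * t) / (μ.re - b) ^ j := by
        field_simp
    _ ≤ Real.exp ((μ.re - b) * -t) * j ! * Real.exp (μ.re * t) / (μ.re - b) ^ j := by
        gcongr
    _ = j ! / (μ.re - b) ^ j * Real.exp (b * t) := by
        rw [mul_comm (Real.exp _), mul_assoc, ← Real.exp_add]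
        ring_nf

theorem Asymptotics.IsBigO.smul_const {α E : Type*} [NormedAddCommGroup E] [NormedSpace ℂ E]
    {l : Filter α} {f : α → ℂ} {g : α → ℝ} (h : f =O[l] g) (c : E) :
    (fun x => f x • c) =O[l] g := by
  simpa using h.smul (isBigO_const_const c (one_ne_zero (α := ℝ)) l)

theorem integrableOn_Iic_of_isBigO_exp {E : Type*} [NormedAddCommGroup E] {f : ℝ → E}
    {a b : ℝ} (hb : 0 < b) (hf : AEStronglyMeasurable f (volume.restrict (Iic a)))
    (h : f =O[𝓟 (Iic a)] fun t => Real.exp (b * t)) : IntegrableOn f (Iic a) := by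
  obtain ⟨C, hC⟩ := isBigO_principal.1 h
  refine Integrable.mono' ((integrableOn_exp_mul_Iic hb a).const_mul C) hf ?_
  refine ae_restrict_of_forall_mem measurableSet_Iic fun t ht => (hC t ht).trans_eq ?_
  rw [Real.norm_of_nonneg (Real.exp_nonneg _)]

namespace Matrix

variable {ι : Type*} [Fintype ι] [DecidableEq ι]

theorem inv_neg {R : Type*} [CommRing R] (M : Matrix ι ι R) : (-M)⁻¹ = -M⁻¹ := by
  by_cases h : IsUnit M.det
  · exact inv_eq_left_inv (by rw [neg_mul_neg, nonsing_inv_mul M h])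
  · have h' : ¬IsUnit (-M).det := by
      simpa [det_neg, IsUnit.mul_iff, (isUnit_neg_one (α := R)).pow] using h
    rw [nonsing_inv_apply_not_isUnit _ h, nonsing_inv_apply_not_isUnit _ h', neg_zero]

/- `NormedSpace.exp` needs no norm, but its series and derivative lemmas want a normed ring;
the `L∞` operator norm provides one and induces the same topology as the sup norm. -/
theorem hasSum_exp (N : Matrix ι ι ℂ) :
    HasSum (fun j => (j ! : ℂ)⁻¹ • N ^ j) (exp N) :=
  @exp_series_hasSum_exp' ℂ _ _ _ _ Matrix.linftyOpNormedRing Matrix.linftyOpNormedAlgebra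
    (inferInstance : CompleteSpace (Matrix ι ι ℂ)) N

theorem hasDerivAt_exp_smul_const (N : Matrix ι ι ℂ) (t : ℝ) :
    HasDerivAt (fun u : ℝ => exp (u • N)) (exp (t • N) * N) t :=
  @_root_.hasDerivAt_exp_smul_const ℝ _ _ Matrix.linftyOpNormedRing Matrix.linftyOpNormedAlgebra
    (inferInstance : CompleteSpace (Matrix ι ι ℂ)) N t

theorem exp_smul_one (c : ℂ) : exp (c • (1 : Matrix ι ι ℂ)) = Complex.exp c • 1 := by
  rw [smul_one_eq_diagonal, exp_diagonal, Pi.exp_def, smul_one_eq_diagonal, Complex.exp_eq_exp_ℂ]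

theorem exp_smul_eq_cexp_smul_exp_smul_sub (M : Matrix ι ι ℂ) (μ : ℂ) (t : ℝ) :
    exp (t • M) = Complex.exp (μ * t) • exp (t • (M - μ • 1)) := by
  have hsplit : t • M = t • (M - μ • 1) + (μ * t) • 1 := by
    rw [smul_sub, ← Complex.coe_smul t (μ • (1 : Matrix ι ι ℂ)), smul_smul, mul_comm,
      sub_add_cancel]
  rw [hsplit, exp_add_of_commute _ _ ((Commute.one_right _).smul_right _), exp_smul_one,
    mul_smul_comm, mul_one]

theorem exp_mulVec_eq_sum_of_pow_mulVec_eq_zero {P : Matrix ι ι ℂ} {w : ι → ℂ} {k : ℕ}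
    (hk : P ^ k *ᵥ w = 0) :
    exp P *ᵥ w = ∑ j ∈ Finset.range k, (j ! : ℂ)⁻¹ • (P ^ j *ᵥ w) := by
  have hsum : HasSum (fun j => (j ! : ℂ)⁻¹ • (P ^ j *ᵥ w)) (exp P *ᵥ w) := by
    simpa [Function.comp_def, mulVec.addMonoidHomLeft, smul_mulVec] using
      (hasSum_exp P).map (mulVec.addMonoidHomLeft w) (continuous_id.matrix_mulVec continuous_const)
  refine hsum.unique (hasSum_sum_of_ne_finset_zero fun j hj => ?_)
  obtain ⟨i, rfl⟩ : ∃ i, j = i + k := ⟨j - k, by grind⟩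
  rw [pow_add, ← mulVec_mulVec, hk, mulVec_zero, smul_zero]

theorem exp_smul_mulVec_eq_sum {N : Matrix ι ι ℂ} {μ : ℂ} {w : ι → ℂ} {k : ℕ}
    (hk : (N - μ • 1) ^ k *ᵥ w = 0) (t : ℝ) :
    exp (t • N) *ᵥ w = ∑ j ∈ Finset.range k,
      ((t : ℂ) ^ j * Complex.exp (μ * t)) • ((j ! : ℂ)⁻¹ • ((N - μ • 1) ^ j *ᵥ w)) := by
  have hk' : (t • (N - μ • 1)) ^ k *ᵥ w = 0 := by rw [smul_pow, smul_mulVec, hk, smul_zero]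
  rw [exp_smul_eq_cexp_smul_exp_smul_sub N μ, smul_mulVec,
    exp_mulVec_eq_sum_of_pow_mulVec_eq_zero hk', Finset.smul_sum]
  refine Finset.sum_congr rfl fun j _ => ?_
  rw [smul_pow, smul_mulVec, ← Complex.coe_smul, smul_comm, smul_smul, smul_smul, smul_smul]
  push_cast
  ring_nf

theorem isBigO_exp_smul_mulVec_of_pow_mulVec_eq_zero {N : Matrix ι ι ℂ} {μ : ℂ} {w : ι → ℂ}
    {k : ℕ} (hk : (N - μ • 1) ^ k *ᵥ w = 0) {b : ℝ} (hb : b < μ.re) :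
    (fun t : ℝ => exp (t • N) *ᵥ w) =O[𝓟 (Iic 0)] fun t => Real.exp (b * t) := by
  simp_rw [exp_smul_mulVec_eq_sum hk]
  exact IsBigO.fun_sum fun j _ => (isBigO_pow_mul_cexp_Iic hb j).smul_const _

theorem isBigO_exp_smul_mulVec {N : Matrix ι ι ℂ} {b : ℝ}
    (hb : ∀ μ ∈ spectrum ℂ N, b < μ.re) (v : ι → ℂ) :
    (fun t : ℝ => exp (t • N) *ᵥ v) =O[𝓟 (Iic 0)] fun t => Real.exp (b * t) := by
  have hf : ∀ (μ : ℂ) (k : ℕ),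
      (toLinAlgEquiv' N - μ • 1) ^ k = toLinAlgEquiv' ((N - μ • 1) ^ k) :=
    fun μ k => by simp
  obtain ⟨c, hc, rfl⟩ := (Submodule.mem_iSup_iff_exists_finsupp _ v).1
    ((Module.End.iSup_maxGenEigenspace_eq_top (toLinAlgEquiv' N)).ge trivial)
  simp_rw [Finsupp.sum, mulVec_sum]
  refine IsBigO.fun_sum fun μ hμ => ?_
  obtain ⟨k, hk⟩ := (Module.End.mem_maxGenEigenspace _ _ _).1 (hc μ)
  have hspec : μ ∈ spectrum ℂ N := by
    rw [← AlgEquiv.spectrum_eq toLinAlgEquiv' N]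
    refine (Module.End.hasEigenvalue_of_hasGenEigenvalue (k := k) ?_).mem_spectrum
    exact (Submodule.ne_bot_iff _).2
      ⟨c μ, Module.End.mem_genEigenspace_nat.2 hk, Finsupp.mem_support_iff.1 hμ⟩
  rw [hf, toLinAlgEquiv'_apply] at hk
  exact isBigO_exp_smul_mulVec_of_pow_mulVec_eq_zero hk (hb μ hspec)

theorem isBigO_exp_smul {N : Matrix ι ι ℂ} {b : ℝ} (hb : ∀ μ ∈ spectrum ℂ N, b < μ.re) :
    (fun t : ℝ => exp (t • N)) =O[𝓟 (Iic 0)] fun t => Real.exp (b * t) := by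
  refine isBigO_pi.2 fun i => isBigO_pi.2 fun j => ?_
  simpa [mulVec_single_one] using isBigO_pi.1 (isBigO_exp_smul_mulVec hb (Pi.single j 1)) i

theorem integral_exp_smul_Iic_mul_self {N : Matrix ι ι ℂ}
    (hint : IntegrableOn (fun t : ℝ => exp (t • N)) (Iic 0))
    (hlim : Tendsto (fun t : ℝ => exp (t • N)) atBot (𝓝 0)) :
    (∫ t in Iic (0 : ℝ), exp (t • N)) * N = 1 := by
  let L := (LinearMap.mulRight ℂ N).toContinuousLinearMap
  have hftc := integral_Iic_of_hasDerivAt_of_tendsto'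
    (fun t _ => hasDerivAt_exp_smul_const N t) (L.integrable_comp hint) hlim
  exact (L.integral_comp_comm hint).symm.trans (hftc.trans (by simp))

theorem integral_exp_smul_Iic {N : Matrix ι ι ℂ} (hN : ∀ μ ∈ spectrum ℂ N, 0 < μ.re) :
    IntegrableOn (fun t : ℝ => exp (t • N)) (Iic 0) ∧
      ∫ t in Iic (0 : ℝ), exp (t • N) = N⁻¹ := by
  obtain ⟨b, hb, hb0⟩ : ∃ b, (∀ μ ∈ spectrum ℂ N, b < μ.re) ∧ 0 < b :=
    ((((N.finite_spectrum.eventually_all).2 fun μ hμ => eventually_lt_nhds (hN μ hμ)).filter_mono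
      nhdsWithin_le_nhds).and (self_mem_nhdsWithin (s := Ioi 0))).exists
  have hO := isBigO_exp_smul hb
  have hcont : Continuous fun t : ℝ => exp (t • N) :=
    continuous_iff_continuousAt.2 fun t => (hasDerivAt_exp_smul_const N t).continuousAt
  -- instance search does not see through the topology of `Matrix`
  have : TopologicalSpace.PseudoMetrizableSpace (Matrix ι ι ℂ) :=
    inferInstanceAs (TopologicalSpace.PseudoMetrizableSpace (ι → ι → ℂ))
  have hint := integrableOn_Iic_of_isBigO_exp hb0 hcont.aestronglyMeasurable hO
  have hlim : Tendsto (fun t : ℝ => exp (t • N)) atBot (𝓝 0) :=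
    (hO.mono (le_principal_iff.2 (Iic_mem_atBot 0))).trans_tendsto
      (Real.tendsto_exp_atBot.comp (tendsto_id.const_mul_atBot hb0))
  exact ⟨hint, (inv_eq_left_inv (integral_exp_smul_Iic_mul_self hint hlim)).symm⟩

end Matrix

/-- Anticausal Laplace transform of a matrix exponential: if `Re s < Re μ` for every
eigenvalue `μ` of `A`, then `sI - A` is invertible, `t ↦ e^{-st} exp(tA)` is
integrable on `(-∞,0]`, and `∫_{-∞}^0 e^{-st} exp(tA) dt = -(sI - A)⁻¹`. -/
theorem laplace_matrix_exp_anticausal (n : ℕ) (A : Matrix (Fin n) (Fin n) ℂ) (s : ℂ)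
    (hs : ∀ μ ∈ spectrum ℂ A, s.re < μ.re) :
    IsUnit (s • (1 : Matrix (Fin n) (Fin n) ℂ) - A) ∧
    IntegrableOn (fun t : ℝ => Complex.exp (-s * t) • NormedSpace.exp (t • A))
      (Set.Iic (0 : ℝ)) ∧
    ∫ t in Set.Iic (0 : ℝ), Complex.exp (-s * t) • NormedSpace.exp (t • A) =
      -(s • (1 : Matrix (Fin n) (Fin n) ℂ) - A)⁻¹ := by
  have hexp : ∀ t : ℝ, Complex.exp (-s * t) • exp (t • A) = exp (t • (A - s • 1)) := fun t => by
    rw [exp_smul_eq_cexp_smul_exp_smul_sub A s, smul_smul, ← Complex.exp_add, neg_mul,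
      neg_add_cancel, Complex.exp_zero, one_smul]
  have hspec : ∀ μ ∈ spectrum ℂ (A - s • 1), 0 < μ.re := by
    rintro _ hμ
    rw [← Algebra.algebraMap_eq_smul_one, ← spectrum.sub_singleton_eq] at hμ
    obtain ⟨ν, hν, _, rfl, rfl⟩ := hμ
    simpa using hs ν hν
  obtain ⟨hint, hintegral⟩ := integral_exp_smul_Iic hspec
  simp_rw [hexp]
  refine ⟨?_, hint, ?_⟩
  · simpa [Algebra.algebraMap_eq_smul_one] using
      spectrum.notMem_iff.1 fun h => lt_irrefl _ (hs s h)
  · rw [hintegral, ← neg_sub, Matrix.inv_neg]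
end

section
/- For i = 1, 2, let fᵢ : ℝ^{nᵢ} → ℝ^{nᵢ} be continuously differentiable with Jacobian ∂fᵢ, and let Bᵢ ∈ ℝ^{nᵢ×m}, Cᵢ ∈ ℝ^{m×nᵢ}, λ ≥ 0, γᵢ > 0, εᵢ > 0, and let Pᵢ ∈ ℝ^{nᵢ×nᵢ} be symmetric with exactly pᵢ negative eigenvalues, nᵢ - pᵢ positive eigenvalues and no zero eigenvalue. Suppose for each i and all xᵢ, δxᵢ ∈ ℝ^{nᵢ} and δuᵢ ∈ ℝ^m, writing δẋᵢ = ∂fᵢ(xᵢ)δxᵢ + Bᵢδuᵢ and δyᵢ = Cᵢδxᵢ, that 2 δẋᵢᵀ Pᵢ δxᵢ + 2λ δxᵢᵀ Pᵢ δxᵢ + εᵢ|δxᵢ|² ≤ -|δyᵢ|² + γᵢ²|δuᵢ|². If γ₁γ₂ < 1, then the closed-loop vector field F : ℝ^{n₁+n₂} → ℝ^{n₁+n₂}, F(x₁, x₂) = (f₁(x₁) - B₁C₂x₂ , f₂(x₂) + B₂C₁x₁), obtained from the negative feedback interconnection u₁ = -y₂, u₂ = y₁, satisfies: there exist ε > 0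 and a symmetric P ∈ ℝ^{(n₁+n₂)×(n₁+n₂)} with exactly p₁ + p₂ negative eigenvalues, n₁ + n₂ - p₁ - p₂ positive eigenvalues and no zero eigenvalue, such that for all x, δx ∈ ℝ^{n₁+n₂}: 2 (∂F(x)δx)ᵀ P δx + 2λ δxᵀ P δx + ε|δx|² ≤ 0. -/
/-!
Weight the storage of the second system by `β = γ₁ / γ₂ > 0` and take
`P = diag(P₁, β P₂)`. Scaling a block by a positive number moves no eigenvalue across zero,
so `P` has inertia `(p₁ + p₂, 0, n₁ + n₂ - p₁ - p₂)`. Along the closed loop the input of each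
system is the output of the other, so the first dissipation inequality plus `β` times the second
leaves the supply `(γ₁² - β)|δy₂|² + (β γ₂² - 1)|δy₁|²`, and both coefficients are `≤ 0`
because `γ₁ γ₂ < 1`.
-/

open Matrix

/-- The closed-loop vector field of the negative feedback interconnection
`u₁ = -y₂`, `u₂ = y₁` of `ẋᵢ = fᵢ(xᵢ) + Bᵢuᵢ`, `yᵢ = Cᵢxᵢ`. -/
noncomputable def closedLoop {n₁ n₂ m : ℕ}
    (f₁ : (Fin n₁ → ℝ) → (Fin n₁ → ℝ)) (f₂ : (Fin n₂ → ℝ) → (Fin n₂ → ℝ))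
    (B₁ : Matrix (Fin n₁) (Fin m) ℝ) (B₂ : Matrix (Fin n₂) (Fin m) ℝ)
    (C₁ : Matrix (Fin m) (Fin n₁) ℝ) (C₂ : Matrix (Fin m) (Fin n₂) ℝ)
    (x : Fin n₁ ⊕ Fin n₂ → ℝ) : Fin n₁ ⊕ Fin n₂ → ℝ :=
  Sum.elim (f₁ (x ∘ Sum.inl) - B₁.mulVec (C₂.mulVec (x ∘ Sum.inr)))
    (f₂ (x ∘ Sum.inr) + B₂.mulVec (C₁.mulVec (x ∘ Sum.inl)))

section BlockDiagonal

open Polynomial Finset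

variable {ι κ : Type*} [Fintype ι] [DecidableEq ι] [Fintype κ] [DecidableEq κ]
  {A : Matrix ι ι ℝ} {B : Matrix κ κ ℝ}

theorem Matrix.IsHermitian.charpoly_smul_eq (hA : A.IsHermitian) (β : ℝ) :
    (β • A).charpoly = ∏ i, (X - C (β * hA.eigenvalues i)) := by
  conv_lhs => rw [hA.spectral_theorem, ← map_smul, Unitary.conjStarAlgAut_apply,
    charpoly_mul_comm, ← mul_assoc]
  simp [← diagonal_smul, charpoly_diagonal]

theorem Matrix.IsHermitian.eigenvalues_fromBlocks_smul (hA : A.IsHermitian) (hB : B.IsHermitian)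
    (β : ℝ) (hP : (Matrix.fromBlocks A 0 0 (β • B)).IsHermitian) :
    univ.val.map hP.eigenvalues =
      univ.val.map hA.eigenvalues + univ.val.map (β * hB.eigenvalues ·) := by
  have h := hP.roots_charpoly_eq_eigenvalues
  rw [charpoly_fromBlocks_zero₁₂, hA.charpoly_eq, hB.charpoly_smul_eq,
    roots_mul ((monic_prod_of_monic _ _ fun i _ => monic_X_sub_C _).mul
      (monic_prod_of_monic _ _ fun i _ => monic_X_sub_C _)).ne_zero] at h
  simpa [roots_prod, prod_ne_zero_iff, X_sub_C_ne_zero, -map_mul] using h.symm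

theorem Matrix.IsHermitian.card_eigenvalues_fromBlocks_smul (hA : A.IsHermitian)
    (hB : B.IsHermitian) {β : ℝ} {p : ℝ → Prop} [DecidablePred p] (hp : ∀ x, p (β * x) ↔ p x)
    (hP : (Matrix.fromBlocks A 0 0 (β • B)).IsHermitian) :
    #{i | p (hP.eigenvalues i)} = #{i | p (hA.eigenvalues i)} + #{i | p (hB.eigenvalues i)} := by
  have h := congrArg (Multiset.countP p) (hA.eigenvalues_fromBlocks_smul hB β hP)
  simp only [Multiset.countP_add, Multiset.countP_map, hp] at h
  exact h

end BlockDiagonal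

theorem Matrix.dotProduct_fromBlocks_mulVec {ι κ R : Type*} [Fintype ι] [Fintype κ] [CommSemiring R]
    (A : Matrix ι ι R) (D : Matrix κ κ R) (v w : ι ⊕ κ → R) :
    v ⬝ᵥ fromBlocks A 0 0 D *ᵥ w =
      v ∘ Sum.inl ⬝ᵥ A *ᵥ (w ∘ Sum.inl) + v ∘ Sum.inr ⬝ᵥ D *ᵥ (w ∘ Sum.inr) := by
  simp [fromBlocks_mulVec, dotProduct_block]

theorem hasFDerivAt_sumElim {𝕜 E F ι κ : Type*} [NontriviallyNormedField 𝕜]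
    [NormedAddCommGroup E] [NormedSpace 𝕜 E] [NormedAddCommGroup F] [NormedSpace 𝕜 F]
    [Fintype ι] [Fintype κ] {g₁ : E → ι → F} {g₂ : E → κ → F} {g₁' : E →L[𝕜] ι → F}
    {g₂' : E →L[𝕜] κ → F} {x : E} (h₁ : HasFDerivAt g₁ g₁' x) (h₂ : HasFDerivAt g₂ g₂' x) :
    HasFDerivAt (fun y => Sum.elim (g₁ y) (g₂ y))
      ((ContinuousLinearEquiv.sumPiEquivProdPi 𝕜 ι κ fun _ => F).symm.toContinuousLinearMap.comp
        (g₁'.prod g₂')) x :=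
  (ContinuousLinearEquiv.sumPiEquivProdPi 𝕜 ι κ fun _ => F).symm.hasFDerivAt.comp x (h₁.prodMk h₂)

theorem small_gain_add_mul_nonpos {D₁ D₂ s₁ s₂ y₁ y₂ γ₁ γ₂ ε₁ ε₂ β ε : ℝ}
    (h₁ : D₁ + ε₁ * s₁ ≤ -y₁ + γ₁ ^ 2 * y₂) (h₂ : D₂ + ε₂ * s₂ ≤ -y₂ + γ₂ ^ 2 * y₁)
    (hβ : 0 ≤ β) (hγ₁ : γ₁ ^ 2 ≤ β) (hγ₂ : β * γ₂ ^ 2 ≤ 1) (hε₁ : ε ≤ ε₁) (hε₂ : ε ≤ β * ε₂)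
    (hs₁ : 0 ≤ s₁) (hs₂ : 0 ≤ s₂) (hy₁ : 0 ≤ y₁) (hy₂ : 0 ≤ y₂) :
    D₁ + β * D₂ + ε * (s₁ + s₂) ≤ 0 := by
  linear_combination h₁ + mul_le_mul_of_nonneg_left h₂ hβ + mul_le_mul_of_nonneg_right hγ₁ hy₂ +
    mul_le_mul_of_nonneg_right hγ₂ hy₁ + mul_le_mul_of_nonneg_right hε₁ hs₁ +
    mul_le_mul_of_nonneg_right hε₂ hs₂

def HasDifferentialGain {ι υ ο : Type*} [Fintype ι] [Fintype υ] [Fintype ο]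
    (f : (ι → ℝ) → ι → ℝ) (B : Matrix ι υ ℝ) (C : Matrix ο ι ℝ) (P : Matrix ι ι ℝ)
    (lam ε γ : ℝ) : Prop :=
  ∀ (x δx : ι → ℝ) (δu : υ → ℝ),
    2 * ((fderiv ℝ f x δx + B *ᵥ δu) ⬝ᵥ P *ᵥ δx) + 2 * lam * (δx ⬝ᵥ P *ᵥ δx) + ε * (δx ⬝ᵥ δx) ≤
      -(C *ᵥ δx ⬝ᵥ C *ᵥ δx) + γ ^ 2 * (δu ⬝ᵥ δu)

section ClosedLoop

variable {n₁ n₂ m : ℕ} {f₁ : (Fin n₁ → ℝ) → (Fin n₁ → ℝ)} {f₂ : (Fin n₂ → ℝ) → (Fin n₂ → ℝ)}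
  {B₁ : Matrix (Fin n₁) (Fin m) ℝ} {B₂ : Matrix (Fin n₂) (Fin m) ℝ}
  {C₁ : Matrix (Fin m) (Fin n₁) ℝ} {C₂ : Matrix (Fin m) (Fin n₂) ℝ}

theorem fderiv_closedLoop_apply {x : Fin n₁ ⊕ Fin n₂ → ℝ}
    (hf₁ : DifferentiableAt ℝ f₁ (x ∘ Sum.inl)) (hf₂ : DifferentiableAt ℝ f₂ (x ∘ Sum.inr))
    (δx : Fin n₁ ⊕ Fin n₂ → ℝ) :
    fderiv ℝ (closedLoop f₁ f₂ B₁ B₂ C₁ C₂) x δx =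
      Sum.elim (fderiv ℝ f₁ (x ∘ Sum.inl) (δx ∘ Sum.inl) - B₁ *ᵥ C₂ *ᵥ (δx ∘ Sum.inr))
        (fderiv ℝ f₂ (x ∘ Sum.inr) (δx ∘ Sum.inr) + B₂ *ᵥ C₁ *ᵥ (δx ∘ Sum.inl)) := by
  let π₁ := (LinearMap.funLeft ℝ ℝ (Sum.inl : Fin n₁ → Fin n₁ ⊕ Fin n₂)).toContinuousLinearMap
  let π₂ := (LinearMap.funLeft ℝ ℝ (Sum.inr : Fin n₂ → Fin n₁ ⊕ Fin n₂)).toContinuousLinearMap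
  let K₁ := (B₁.mulVecLin ∘ₗ C₂.mulVecLin).toContinuousLinearMap.comp π₂
  let K₂ := (B₂.mulVecLin ∘ₗ C₁.mulVecLin).toContinuousLinearMap.comp π₁
  have h₁ := (hf₁.hasFDerivAt.comp x π₁.hasFDerivAt).sub K₁.hasFDerivAt
  have h₂ := (hf₂.hasFDerivAt.comp x π₂.hasFDerivAt).add K₂.hasFDerivAt
  exact DFunLike.congr_fun (hasFDerivAt_sumElim h₁ h₂).fderiv δx

theorem closedLoop_dissipation_nonpos {P₁ : Matrix (Fin n₁) (Fin n₁) ℝ}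
    {P₂ : Matrix (Fin n₂) (Fin n₂) ℝ} {lam γ₁ γ₂ ε₁ ε₂ β ε : ℝ}
    (hf₁ : Differentiable ℝ f₁) (hf₂ : Differentiable ℝ f₂)
    (h₁ : HasDifferentialGain f₁ B₁ C₁ P₁ lam ε₁ γ₁)
    (h₂ : HasDifferentialGain f₂ B₂ C₂ P₂ lam ε₂ γ₂)
    (hβ : 0 ≤ β) (hγ₁ : γ₁ ^ 2 ≤ β) (hγ₂ : β * γ₂ ^ 2 ≤ 1) (hε₁ : ε ≤ ε₁) (hε₂ : ε ≤ β * ε₂)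
    (x δx : Fin n₁ ⊕ Fin n₂ → ℝ) :
    2 * (fderiv ℝ (closedLoop f₁ f₂ B₁ B₂ C₁ C₂) x δx ⬝ᵥ fromBlocks P₁ 0 0 (β • P₂) *ᵥ δx) +
        2 * lam * (δx ⬝ᵥ fromBlocks P₁ 0 0 (β • P₂) *ᵥ δx) + ε * (δx ⬝ᵥ δx) ≤ 0 := by
  have h₁' := h₁ (x ∘ Sum.inl) (δx ∘ Sum.inl) (-(C₂ *ᵥ (δx ∘ Sum.inr)))
  rw [mulVec_neg, ← sub_eq_add_neg, neg_dotProduct_neg] at h₁'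
  have h₂' := h₂ (x ∘ Sum.inr) (δx ∘ Sum.inr) (C₁ *ᵥ (δx ∘ Sum.inl))
  have hsq : ∀ {n : ℕ} (v : Fin n → ℝ), 0 ≤ v ⬝ᵥ v := fun v => by
    simpa using dotProduct_star_self_nonneg v
  rw [fderiv_closedLoop_apply (hf₁ _) (hf₂ _), dotProduct_fromBlocks_mulVec,
    dotProduct_fromBlocks_mulVec, dotProduct_block δx δx]
  simp only [Sum.elim_comp_inl, Sum.elim_comp_inr, smul_mulVec, dotProduct_smul, smul_eq_mul]
  linear_combination small_gain_add_mul_nonpos h₁' h₂' hβ hγ₁ hγ₂ hε₁ hε₂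
    (hsq _) (hsq _) (hsq _) (hsq _)

end ClosedLoop

theorem small_gain_dominance_general {n₁ n₂ m : ℕ} (p₁ p₂ : ℕ)
    (f₁ : (Fin n₁ → ℝ) → (Fin n₁ → ℝ)) (f₂ : (Fin n₂ → ℝ) → (Fin n₂ → ℝ))
    (B₁ : Matrix (Fin n₁) (Fin m) ℝ) (B₂ : Matrix (Fin n₂) (Fin m) ℝ)
    (C₁ : Matrix (Fin m) (Fin n₁) ℝ) (C₂ : Matrix (Fin m) (Fin n₂) ℝ)
    (lam γ₁ γ₂ ε₁ ε₂ : ℝ) (hγ₁ : 0 < γ₁) (hγ₂ : 0 < γ₂)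
    (hε₁ : 0 < ε₁) (hε₂ : 0 < ε₂)
    (hf₁ : ContDiff ℝ 1 f₁) (hf₂ : ContDiff ℝ 1 f₂)
    (P₁ : Matrix (Fin n₁) (Fin n₁) ℝ) (P₂ : Matrix (Fin n₂) (Fin n₂) ℝ)
    (hP₁ : P₁.IsHermitian) (hP₂ : P₂.IsHermitian)
    (hP₁neg : (Finset.univ.filter fun i => hP₁.eigenvalues i < 0).card = p₁)
    (hP₁pos : (Finset.univ.filter fun i => 0 < hP₁.eigenvalues i).card = n₁ - p₁)
    (hP₁zero : ∀ i, hP₁.eigenvalues i ≠ 0)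
    (hP₂neg : (Finset.univ.filter fun i => hP₂.eigenvalues i < 0).card = p₂)
    (hP₂pos : (Finset.univ.filter fun i => 0 < hP₂.eigenvalues i).card = n₂ - p₂)
    (hP₂zero : ∀ i, hP₂.eigenvalues i ≠ 0)
    (hdiss₁ : ∀ (x δx : Fin n₁ → ℝ) (δu : Fin m → ℝ),
      2 * ((fderiv ℝ f₁ x δx + B₁.mulVec δu) ⬝ᵥ P₁.mulVec δx) +
          2 * lam * (δx ⬝ᵥ P₁.mulVec δx) + ε₁ * (δx ⬝ᵥ δx) ≤
        -(C₁.mulVec δx ⬝ᵥ C₁.mulVec δx) + γ₁ ^ 2 * (δu ⬝ᵥ δu))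
    (hdiss₂ : ∀ (x δx : Fin n₂ → ℝ) (δu : Fin m → ℝ),
      2 * ((fderiv ℝ f₂ x δx + B₂.mulVec δu) ⬝ᵥ P₂.mulVec δx) +
          2 * lam * (δx ⬝ᵥ P₂.mulVec δx) + ε₂ * (δx ⬝ᵥ δx) ≤
        -(C₂.mulVec δx ⬝ᵥ C₂.mulVec δx) + γ₂ ^ 2 * (δu ⬝ᵥ δu))
    (hsg : γ₁ * γ₂ < 1) :
    ∃ ε : ℝ, 0 < ε ∧
      ∃ P : Matrix (Fin n₁ ⊕ Fin n₂) (Fin n₁ ⊕ Fin n₂) ℝ, ∃ hP : P.IsHermitian,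
        (Finset.univ.filter fun i => hP.eigenvalues i < 0).card = p₁ + p₂ ∧
        (Finset.univ.filter fun i => 0 < hP.eigenvalues i).card = n₁ + n₂ - (p₁ + p₂) ∧
        (∀ i, hP.eigenvalues i ≠ 0) ∧
        ∀ x δx : Fin n₁ ⊕ Fin n₂ → ℝ,
          2 * ((fderiv ℝ (closedLoop f₁ f₂ B₁ B₂ C₁ C₂) x δx) ⬝ᵥ P.mulVec δx) +
              2 * lam * (δx ⬝ᵥ P.mulVec δx) + ε * (δx ⬝ᵥ δx) ≤ 0 := by
  set β := γ₁ / γ₂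
  have hβ : 0 < β := div_pos hγ₁ hγ₂
  have hβγ₁ : γ₁ ^ 2 ≤ β := by rw [le_div_iff₀ hγ₂]; nlinarith
  have hβγ₂ : β * γ₂ ^ 2 ≤ 1 := by rw [div_mul_eq_mul_div, div_le_one hγ₂]; nlinarith
  have hP : (fromBlocks P₁ 0 0 (β • P₂)).IsHermitian :=
    hP₁.fromBlocks (by simp) (hP₂.smul (IsSelfAdjoint.all β))
  have hp₁ : p₁ ≤ n₁ := hP₁neg ▸ (Finset.card_filter_le _ _).trans_eq (Finset.card_fin n₁)
  have hp₂ : p₂ ≤ n₂ := hP₂neg ▸ (Finset.card_filter_le _ _).trans_eq (Finset.card_fin n₂)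
  refine ⟨min ε₁ (β * ε₂), lt_min hε₁ (mul_pos hβ hε₂), _, hP, ?_, ?_, ?_, ?_⟩
  · rw [hP₁.card_eigenvalues_fromBlocks_smul hP₂ (p := (· < 0))
      (fun _ => smul_neg_iff_of_pos_left hβ) hP, hP₁neg, hP₂neg]
  · rw [hP₁.card_eigenvalues_fromBlocks_smul hP₂ (p := (0 < ·))
      (fun _ => mul_pos_iff_of_pos_left hβ) hP, hP₁pos, hP₂pos]
    omega
  · have h := hP₁.card_eigenvalues_fromBlocks_smul hP₂ (p := (· = 0))
      (fun _ => mul_eq_zero_iff_left hβ.ne') hP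
    simpa [Finset.filter_eq_empty_iff, hP₁zero, hP₂zero] using h
  · exact closedLoop_dissipation_nonpos (hf₁.differentiable one_ne_zero)
      (hf₂.differentiable one_ne_zero) hdiss₁ hdiss₂ hβ.le hβγ₁ hβγ₂ (min_le_left _ _)
      (min_le_right _ _)

/-- Small-gain theorem for `p`-dominance (Theorem 6 of the paper): if system `i` has
differential `L_{2,pᵢ}`-gain less than `γᵢ` with rate `λ` and `γ₁γ₂ < 1`, then the
negative feedback interconnection is strictly `(p₁+p₂)`-dominant with rate `λ`. -/
theorem small_gain_dominance {n₁ n₂ m : ℕ} (p₁ p₂ : ℕ)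
    (f₁ : (Fin n₁ → ℝ) → (Fin n₁ → ℝ)) (f₂ : (Fin n₂ → ℝ) → (Fin n₂ → ℝ))
    (B₁ : Matrix (Fin n₁) (Fin m) ℝ) (B₂ : Matrix (Fin n₂) (Fin m) ℝ)
    (C₁ : Matrix (Fin m) (Fin n₁) ℝ) (C₂ : Matrix (Fin m) (Fin n₂) ℝ)
    (lam γ₁ γ₂ ε₁ ε₂ : ℝ) (hlam : 0 ≤ lam) (hγ₁ : 0 < γ₁) (hγ₂ : 0 < γ₂)
    (hε₁ : 0 < ε₁) (hε₂ : 0 < ε₂)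
    (hf₁ : ContDiff ℝ 1 f₁) (hf₂ : ContDiff ℝ 1 f₂)
    (P₁ : Matrix (Fin n₁) (Fin n₁) ℝ) (P₂ : Matrix (Fin n₂) (Fin n₂) ℝ)
    (hP₁ : P₁.IsHermitian) (hP₂ : P₂.IsHermitian)
    (hP₁neg : (Finset.univ.filter fun i => hP₁.eigenvalues i < 0).card = p₁)
    (hP₁pos : (Finset.univ.filter fun i => 0 < hP₁.eigenvalues i).card = n₁ - p₁)
    (hP₁zero : ∀ i, hP₁.eigenvalues i ≠ 0)
    (hP₂neg : (Finset.univ.filter fun i => hP₂.eigenvalues i < 0).card = p₂)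
    (hP₂pos : (Finset.univ.filter fun i => 0 < hP₂.eigenvalues i).card = n₂ - p₂)
    (hP₂zero : ∀ i, hP₂.eigenvalues i ≠ 0)
    (hdiss₁ : ∀ (x δx : Fin n₁ → ℝ) (δu : Fin m → ℝ),
      2 * ((fderiv ℝ f₁ x δx + B₁.mulVec δu) ⬝ᵥ P₁.mulVec δx) +
          2 * lam * (δx ⬝ᵥ P₁.mulVec δx) + ε₁ * (δx ⬝ᵥ δx) ≤
        -(C₁.mulVec δx ⬝ᵥ C₁.mulVec δx) + γ₁ ^ 2 * (δu ⬝ᵥ δu))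
    (hdiss₂ : ∀ (x δx : Fin n₂ → ℝ) (δu : Fin m → ℝ),
      2 * ((fderiv ℝ f₂ x δx + B₂.mulVec δu) ⬝ᵥ P₂.mulVec δx) +
          2 * lam * (δx ⬝ᵥ P₂.mulVec δx) + ε₂ * (δx ⬝ᵥ δx) ≤
        -(C₂.mulVec δx ⬝ᵥ C₂.mulVec δx) + γ₂ ^ 2 * (δu ⬝ᵥ δu))
    (hsg : γ₁ * γ₂ < 1) :
    ∃ ε : ℝ, 0 < ε ∧
      ∃ P : Matrix (Fin n₁ ⊕ Fin n₂) (Fin n₁ ⊕ Fin n₂) ℝ, ∃ hP : P.IsHermitian,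
        (Finset.univ.filter fun i => hP.eigenvalues i < 0).card = p₁ + p₂ ∧
        (Finset.univ.filter fun i => 0 < hP.eigenvalues i).card = n₁ + n₂ - (p₁ + p₂) ∧
        (∀ i, hP.eigenvalues i ≠ 0) ∧
        ∀ x δx : Fin n₁ ⊕ Fin n₂ → ℝ,
          2 * ((fderiv ℝ (closedLoop f₁ f₂ B₁ B₂ C₁ C₂) x δx) ⬝ᵥ P.mulVec δx) +
              2 * lam * (δx ⬝ᵥ P.mulVec δx) + ε * (δx ⬝ᵥ δx) ≤ 0 :=
  small_gain_dominance_general p₁ p₂ f₁ f₂ B₁ B₂ C₁ C₂ lam γ₁ γ₂ ε₁ ε₂ hγ₁ hγ₂ hε₁ hε₂ hf₁ hf₂ P₁ P₂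
    hP₁ hP₂ hP₁neg hP₁pos hP₁zero hP₂neg hP₂pos hP₂zero hdiss₁ hdiss₂ hsg
end

section
/- Let f : ℝⁿ → ℝⁿ be continuously differentiable with Jacobian ∂f, let λ ≥ 0, ε > 0, and let P ∈ ℝ^{n×n} be symmetric positive definite such that for all x ∈ ℝⁿ the matrix ∂f(x)ᵀP + P∂f(x) + 2λP + εI is negative semidefinite. Then there exist constants c > 0 and μ > 0 such that any two solutions x₁, x₂ : [0, ∞) → ℝⁿ of ẋ = f(x) satisfy |x₁(t) - x₂(t)| ≤ c e^{-μt} |x₁(0) - x₂(0)| for all t ≥ 0. Consequently, f has at most one zero, and if x* ∈ ℝⁿ satisfies f(x*) = 0 then every solution of ẋ = f(x) defined on [0, ∞) converges to x* as t → ∞. -/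
/-!
The LMI says that `V v = vᵀ P v` decreases along the linearisation: `2 vᵀ P ∂f(x) v ≤ -ε |v|²`
(the `2λP` term only helps since `λ ≥ 0`). The mean value theorem on the segment from `b` to `a`
turns this into the incremental inequality `2 (a - b)ᵀ P (f a - f b) ≤ -ε |a - b|²`, which already
forces uniqueness of zeros. Along two solutions, `V (x₁ - x₂)` then satisfies `V' ≤ -(ε / M) V`
with `P ≤ M I`, and Grönwall together with `m I ≤ P` gives
`|x₁ t - x₂ t| ≤ √(M / m) e^{-ε t / (2 M)} |x₁ 0 - x₂ 0|`. Taking `x₂` constant at an equilibrium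
gives convergence.
-/

open Matrix Filter Topology

namespace Matrix

open scoped MatrixOrder

variable {ι : Type*} [Fintype ι]

theorem IsSymm.dotProduct_mulVec_comm {R : Type*} [CommSemiring R] {P : Matrix ι ι R}
    (hP : P.IsSymm) (u w : ι → R) : u ⬝ᵥ P *ᵥ w = w ⬝ᵥ P *ᵥ u := by
  rw [dotProduct_mulVec, ← mulVec_transpose, hP.eq, dotProduct_comm]

theorem mul_dotProduct_self_le_of_posSemidef_sub_smul_one [DecidableEq ι] {P : Matrix ι ι ℝ}
    {r : ℝ} (h : (P - r • 1).PosSemidef) (v : ι → ℝ) : r * (v ⬝ᵥ v) ≤ v ⬝ᵥ P *ᵥ v := by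
  have := h.dotProduct_mulVec_nonneg v
  simp only [star_trivial, sub_mulVec, smul_mulVec, one_mulVec, dotProduct_sub, dotProduct_smul,
    smul_eq_mul] at this
  linarith

theorem dotProduct_mulVec_le_of_posSemidef_smul_one_sub [DecidableEq ι] {P : Matrix ι ι ℝ}
    {r : ℝ} (h : (r • 1 - P).PosSemidef) (v : ι → ℝ) : v ⬝ᵥ P *ᵥ v ≤ r * (v ⬝ᵥ v) := by
  have := h.dotProduct_mulVec_nonneg v
  simp only [star_trivial, sub_mulVec, smul_mulVec, one_mulVec, dotProduct_sub, dotProduct_smul,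
    smul_eq_mul] at this
  linarith

theorem PosDef.exists_pos_posSemidef_sub_smul_one [DecidableEq ι] {P : Matrix ι ι ℝ}
    (hP : P.PosDef) : ∃ m : ℝ, 0 < m ∧ (P - m • 1).PosSemidef := by
  have hspec : ∀ x ∈ spectrum ℝ P, 0 < x := by
    rw [hP.isHermitian.spectrum_real_eq_range_eigenvalues]
    rintro _ ⟨i, rfl⟩
    exact hP.eigenvalues_pos i
  have hlow : ∀ᶠ m in 𝓝[>] (0 : ℝ), ∀ x ∈ spectrum ℝ P, m ≤ x :=
    finite_real_spectrum.eventually_all.2 fun x hx =>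
      nhdsWithin_le_nhds (eventually_le_nhds (hspec x hx))
  obtain ⟨m, hm, hm0⟩ := (hlow.and self_mem_nhdsWithin).exists
  refine ⟨m, hm0, ?_⟩
  rw [← Algebra.algebraMap_eq_smul_one, ← le_iff]
  exact algebraMap_le_of_le_spectrum hm hP.isHermitian

theorem IsHermitian.exists_pos_posSemidef_smul_one_sub [DecidableEq ι] {P : Matrix ι ι ℝ}
    (hP : P.IsHermitian) : ∃ M : ℝ, 0 < M ∧ (M • 1 - P).PosSemidef := by
  have hup : ∀ᶠ M in atTop, ∀ x ∈ spectrum ℝ P, x ≤ M :=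
    finite_real_spectrum.eventually_all.2 fun x _ => eventually_ge_atTop x
  obtain ⟨M, hM, hM0⟩ := (hup.and (eventually_gt_atTop 0)).exists
  refine ⟨M, hM0, ?_⟩
  rw [← Algebra.algebraMap_eq_smul_one, ← le_iff]
  exact le_algebraMap_of_spectrum_le hM hP

theorem dotProduct_mulVec_mulVec_le_of_posSemidef_neg [DecidableEq ι] {P J : Matrix ι ι ℝ}
    {lam ε : ℝ} (hP : P.PosSemidef) (hlam : 0 ≤ lam)
    (h : (-(Jᵀ * P + P * J + (2 * lam) • P + ε • 1)).PosSemidef) (v : ι → ℝ) :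
    v ⬝ᵥ P *ᵥ (J *ᵥ v) ≤ -(ε / 2) * (v ⬝ᵥ v) := by
  have hLyap := h.dotProduct_mulVec_nonneg v
  have hPv := hP.dotProduct_mulVec_nonneg v
  have hJP : v ⬝ᵥ Jᵀ *ᵥ (P *ᵥ v) = v ⬝ᵥ P *ᵥ (J *ᵥ v) := by
    rw [dotProduct_mulVec, vecMul_transpose,
      (isHermitian_iff_isSymm.1 hP.isHermitian).dotProduct_mulVec_comm]
  simp only [star_trivial, neg_mulVec, add_mulVec, smul_mulVec, one_mulVec, dotProduct_neg,
    dotProduct_add, dotProduct_smul, smul_eq_mul, ← mulVec_mulVec, hJP] at hLyap hPv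
  linarith [mul_nonneg hlam hPv]

theorem IsSymm.hasDerivAt_dotProduct_mulVec {P : Matrix ι ι ℝ} (hP : P.IsSymm)
    {u : ℝ → ι → ℝ} {u' : ι → ℝ} {t : ℝ} (hu : HasDerivAt u u' t) :
    HasDerivAt (fun s => u s ⬝ᵥ P *ᵥ u s) (2 * (u t ⬝ᵥ P *ᵥ u')) t := by
  classical
  have := (toLinearMap₂' ℝ P).toContinuousBilinearMap.hasDerivAt_of_bilinear
    (fun _ => hu) (fun _ => hu)
  simp only [LinearMap.toContinuousBilinearMap_apply, toLinearMap₂'_apply'] at this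
  refine this.congr_deriv ?_
  rw [hP.dotProduct_mulVec_comm u']
  ring

end Matrix

theorem ContinuousLinearMap.map_sub_le_of_map_fderiv_le {E F : Type*} [NormedAddCommGroup E]
    [NormedSpace ℝ E] [NormedAddCommGroup F] [NormedSpace ℝ F] {f : E → F}
    (hf : Differentiable ℝ f) (ℓ : F →L[ℝ] ℝ) {a b : E} {C : ℝ}
    (h : ∀ x, ℓ (fderiv ℝ f x (a - b)) ≤ C) : ℓ (f a - f b) ≤ C := by
  obtain ⟨z, -, hz⟩ := domain_mvt (f := ℓ ∘ f) (s := Set.univ) (x := b) (y := a)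
    (fun x _ => (ℓ.hasFDerivAt.comp x (hf x).hasFDerivAt).hasFDerivWithinAt) convex_univ
    trivial trivial
  calc ℓ (f a - f b) = ℓ (fderiv ℝ f z (a - b)) := by rw [map_sub]; exact hz
    _ ≤ C := h z

theorem le_mul_exp_neg_of_hasDerivAt_le {V V' : ℝ → ℝ} {k : ℝ}
    (hV : ∀ t, 0 ≤ t → HasDerivAt V (V' t) t) (hdecay : ∀ t, 0 ≤ t → V' t ≤ -k * V t)
    {t : ℝ} (ht : 0 ≤ t) : V t ≤ V 0 * Real.exp (-k * t) := by
  have := le_gronwallBound_of_liminf_deriv_right_le (f' := V') (K := -k) (ε := 0) (b := t)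
    (fun s hs => (hV s hs.1).continuousAt.continuousWithinAt)
    (fun s hs _ hr => (hV s hs.1).hasDerivWithinAt.liminf_right_slope_le hr) le_rfl
    (fun s hs => by rw [add_zero]; exact hdecay s hs.1) t ⟨ht, le_rfl⟩
  rwa [gronwallBound_ε0, sub_zero] at this

section Contraction

variable {ι : Type*} [Fintype ι] {f : (ι → ℝ) → ι → ℝ} {P : Matrix ι ι ℝ} {c : ℝ}

theorem dotProduct_mulVec_sub_le_of_fderiv (hf : Differentiable ℝ f)
    (h : ∀ x v, v ⬝ᵥ P *ᵥ fderiv ℝ f x v ≤ -c * (v ⬝ᵥ v)) (a b : ι → ℝ) :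
    (a - b) ⬝ᵥ P *ᵥ (f a - f b) ≤ -c * ((a - b) ⬝ᵥ (a - b)) := by
  classical
  let ℓ := (toLinearMap₂' ℝ P).toContinuousBilinearMap (a - b)
  have hℓ : ∀ w, ℓ w = (a - b) ⬝ᵥ P *ᵥ w := toLinearMap₂'_apply' P (a - b)
  simpa only [hℓ] using ℓ.map_sub_le_of_map_fderiv_le hf fun x => (hℓ _).trans_le (h x (a - b))

theorem eq_of_dotProduct_mulVec_sub_le (hc : 0 < c)
    (hmono : ∀ a b, (a - b) ⬝ᵥ P *ᵥ (f a - f b) ≤ -c * ((a - b) ⬝ᵥ (a - b)))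
    {a b : ι → ℝ} (ha : f a = 0) (hb : f b = 0) : a = b := by
  have h := hmono a b
  rw [ha, hb, sub_self, mulVec_zero, dotProduct_zero] at h
  have hnonneg : 0 ≤ (a - b) ⬝ᵥ (a - b) := by simpa using dotProduct_self_star_nonneg (a - b)
  have hzero : (a - b) ⬝ᵥ (a - b) = 0 := by nlinarith
  exact sub_eq_zero.1 (dotProduct_self_eq_zero.1 hzero)

theorem exists_dotProduct_self_sub_le_exp (hP : P.PosDef) (hc : 0 < c)
    (hmono : ∀ a b, (a - b) ⬝ᵥ P *ᵥ (f a - f b) ≤ -c * ((a - b) ⬝ᵥ (a - b))) :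
    ∃ C : ℝ, 0 < C ∧ ∃ k : ℝ, 0 < k ∧ ∀ x₁ x₂ : ℝ → ι → ℝ,
      (∀ t, 0 ≤ t → HasDerivAt x₁ (f (x₁ t)) t) → (∀ t, 0 ≤ t → HasDerivAt x₂ (f (x₂ t)) t) →
      ∀ t, 0 ≤ t → (x₁ t - x₂ t) ⬝ᵥ (x₁ t - x₂ t) ≤
        C * Real.exp (-k * t) * ((x₁ 0 - x₂ 0) ⬝ᵥ (x₁ 0 - x₂ 0)) := by
  classical
  obtain ⟨m, hm, hmP⟩ := hP.exists_pos_posSemidef_sub_smul_one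
  obtain ⟨M, hM, hMP⟩ := hP.isHermitian.exists_pos_posSemidef_smul_one_sub
  refine ⟨M / m, div_pos hM hm, 2 * c / M, by positivity, fun x₁ x₂ h₁ h₂ t ht => ?_⟩
  set Δ : ℝ → ι → ℝ := fun s => x₁ s - x₂ s
  have hV : ∀ s, 0 ≤ s → HasDerivAt (fun s => Δ s ⬝ᵥ P *ᵥ Δ s)
      (2 * (Δ s ⬝ᵥ P *ᵥ (f (x₁ s) - f (x₂ s)))) s := fun s hs =>
    (isHermitian_iff_isSymm.1 hP.isHermitian).hasDerivAt_dotProduct_mulVec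
      ((h₁ s hs).sub (h₂ s hs))
  have hdecay : ∀ s, 0 ≤ s → 2 * (Δ s ⬝ᵥ P *ᵥ (f (x₁ s) - f (x₂ s))) ≤
      -(2 * c / M) * (Δ s ⬝ᵥ P *ᵥ Δ s) := by
    intro s _
    have hup := dotProduct_mulVec_le_of_posSemidef_smul_one_sub hMP (Δ s)
    have hscaled : 2 * c / M * (Δ s ⬝ᵥ P *ᵥ Δ s) ≤ 2 * c * (Δ s ⬝ᵥ Δ s) := by
      rw [div_mul_eq_mul_div, div_le_iff₀ hM]
      nlinarith
    linarith [hmono (x₁ s) (x₂ s)]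
  have hkey : m * (Δ t ⬝ᵥ Δ t) ≤ M * (Δ 0 ⬝ᵥ Δ 0) * Real.exp (-(2 * c / M) * t) :=
    (mul_dotProduct_self_le_of_posSemidef_sub_smul_one hmP (Δ t)).trans
      ((le_mul_exp_neg_of_hasDerivAt_le hV hdecay ht).trans (mul_le_mul_of_nonneg_right
        (dotProduct_mulVec_le_of_posSemidef_smul_one_sub hMP (Δ 0)) (Real.exp_pos _).le))
  calc Δ t ⬝ᵥ Δ t = m * (Δ t ⬝ᵥ Δ t) / m := by field_simp
    _ ≤ M * (Δ 0 ⬝ᵥ Δ 0) * Real.exp (-(2 * c / M) * t) / m := by gcongr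
    _ = _ := by ring

theorem exists_sqrt_sum_sq_sub_le_exp (hP : P.PosDef) (hc : 0 < c)
    (hmono : ∀ a b, (a - b) ⬝ᵥ P *ᵥ (f a - f b) ≤ -c * ((a - b) ⬝ᵥ (a - b))) :
    ∃ C : ℝ, 0 < C ∧ ∃ μ : ℝ, 0 < μ ∧ ∀ x₁ x₂ : ℝ → ι → ℝ,
      (∀ t, 0 ≤ t → HasDerivAt x₁ (f (x₁ t)) t) → (∀ t, 0 ≤ t → HasDerivAt x₂ (f (x₂ t)) t) →
      ∀ t, 0 ≤ t → √(∑ i, (x₁ t i - x₂ t i) ^ 2) ≤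
        C * Real.exp (-μ * t) * √(∑ i, (x₁ 0 i - x₂ 0 i) ^ 2) := by
  obtain ⟨C, hC, k, hk, h⟩ := exists_dotProduct_self_sub_le_exp hP hc hmono
  refine ⟨√C, Real.sqrt_pos.2 hC, k / 2, half_pos hk, fun x₁ x₂ h₁ h₂ t ht => ?_⟩
  have hsq : ∀ s, ∑ i, (x₁ s i - x₂ s i) ^ 2 = (x₁ s - x₂ s) ⬝ᵥ (x₁ s - x₂ s) := fun s => by
    simp only [dotProduct, Pi.sub_apply, sq]
  have hexp : Real.exp (-(k / 2) * t) = √(Real.exp (-k * t)) := by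
    rw [← Real.exp_half]
    ring_nf
  rw [hsq, hsq, hexp, ← Real.sqrt_mul hC.le, ← Real.sqrt_mul (by positivity)]
  exact Real.sqrt_le_sqrt (h x₁ x₂ h₁ h₂ t ht)

end Contraction

theorem tendsto_of_sqrt_sum_sq_sub_le_exp {ι : Type*} [Fintype ι] {x : ℝ → ι → ℝ} {y : ι → ℝ}
    {C μ D : ℝ} (hμ : 0 < μ)
    (h : ∀ t, 0 ≤ t → √(∑ i, (x t i - y i) ^ 2) ≤ C * Real.exp (-μ * t) * D) :
    Tendsto x atTop (𝓝 y) := by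
  have hlim : Tendsto (fun t => C * Real.exp (-μ * t) * D) atTop (𝓝 0) := by
    simpa [neg_mul] using ((Real.tendsto_exp_neg_atTop_nhds_zero.comp
      (tendsto_id.const_mul_atTop hμ)).const_mul C).mul_const D
  refine tendsto_pi_nhds.2 fun i => tendsto_iff_norm_sub_tendsto_zero.2 <|
    squeeze_zero' (Eventually.of_forall fun _ => norm_nonneg _) ?_ hlim
  filter_upwards [eventually_ge_atTop 0] with t ht
  refine (Real.abs_le_sqrt ?_).trans (h t ht)
  exact Finset.single_le_sum (f := fun j => (x t j - y j) ^ 2) (fun j _ => sq_nonneg _)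
    (Finset.mem_univ i)

/-- The `p = 0` case of Theorem 9 of the paper: a strictly `0`-dominant system is
exponentially incrementally contracting, so it has at most one equilibrium and every
solution on `[0,∞)` converges to the equilibrium (when one exists). -/
theorem strict_zero_dominance_convergence (n : ℕ)
    (f : (Fin n → ℝ) → (Fin n → ℝ)) (hf : ContDiff ℝ 1 f)
    (lam ε : ℝ) (hlam : 0 ≤ lam) (hε : 0 < ε)
    (P : Matrix (Fin n) (Fin n) ℝ) (hP : P.PosDef)
    (hLMI : ∀ x : Fin n → ℝ,
      (-((LinearMap.toMatrix' (↑(fderiv ℝ f x) : (Fin n → ℝ) →ₗ[ℝ] (Fin n → ℝ)))ᵀ * P +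
          P * LinearMap.toMatrix' (↑(fderiv ℝ f x) : (Fin n → ℝ) →ₗ[ℝ] (Fin n → ℝ)) +
          (2 * lam) • P + ε • (1 : Matrix (Fin n) (Fin n) ℝ))).PosSemidef) :
    (∃ c : ℝ, 0 < c ∧ ∃ μ : ℝ, 0 < μ ∧
      ∀ x₁ x₂ : ℝ → (Fin n → ℝ),
        (∀ t : ℝ, 0 ≤ t → HasDerivAt x₁ (f (x₁ t)) t) →
        (∀ t : ℝ, 0 ≤ t → HasDerivAt x₂ (f (x₂ t)) t) →
        ∀ t : ℝ, 0 ≤ t →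
          Real.sqrt (∑ i, (x₁ t i - x₂ t i) ^ 2) ≤
            c * Real.exp (-μ * t) * Real.sqrt (∑ i, (x₁ 0 i - x₂ 0 i) ^ 2)) ∧
    (∀ a b : Fin n → ℝ, f a = 0 → f b = 0 → a = b) ∧
    (∀ xstar : Fin n → ℝ, f xstar = 0 →
      ∀ x : ℝ → (Fin n → ℝ), (∀ t : ℝ, 0 ≤ t → HasDerivAt x (f (x t)) t) →
        Tendsto x atTop (nhds xstar)) := by
  have hmono : ∀ a b : Fin n → ℝ,
      (a - b) ⬝ᵥ P *ᵥ (f a - f b) ≤ -(ε / 2) * ((a - b) ⬝ᵥ (a - b)) :=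
    dotProduct_mulVec_sub_le_of_fderiv (hf.differentiable one_ne_zero) fun x v => by
      simpa only [LinearMap.toMatrix'_mulVec, ContinuousLinearMap.coe_coe] using
        dotProduct_mulVec_mulVec_le_of_posSemidef_neg hP.posSemidef hlam (hLMI x) v
  obtain ⟨c, hc, μ, hμ, hcontr⟩ := exists_sqrt_sum_sq_sub_le_exp hP (half_pos hε) hmono
  refine ⟨⟨c, hc, μ, hμ, hcontr⟩, fun a b => eq_of_dotProduct_mulVec_sub_le (half_pos hε) hmono,
    fun xstar hstar x hx => ?_⟩
  have hconst : ∀ t : ℝ, 0 ≤ t → HasDerivAt (fun _ => xstar) (f xstar) t := fun t _ =>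
    hstar ▸ hasDerivAt_const t xstar
  exact tendsto_of_sqrt_sum_sq_sub_le_exp hμ (hcontr x (fun _ => xstar) hx hconst)
end
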